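/- Let n ≥ 2, let d_1, …, d_n be unit vectors in ℂ^m, and let ρ_A be a density matrix on ℂ^n with q_i = (ρ_A)_{ii}. Then (P_s(q) − 1/n)² + V(ρ̃_A)² + M(ρ̃_A) ≤ (1 − 1/n)² + M(ρ̃_D), where M(ρ) = (2(n−1)/n²)(1 − Tr(ρ²)) is the normalized mixedness. -/

import Mathlib

open Matrix ComplexOrder

noncomputable section

/-- Inner product ⟨a, b⟩ = ∑ i, conj (a i) * b i on a finite-dimensional complex space. -/
def ip {k : Type*} [Fintype k] (a b : k → ℂ) : ℂ := ∑ i, star (a i) * b i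

/-- The optimal success probability of minimum-error discrimination of the detector
states `d i` with prior probabilities `q i`: the supremum over all POVMs
`Pov` (positive semidefinite matrices summing to the identity) of
`∑ i, q i * ⟨d i, Pov i (d i)⟩`. -/
def Ps {m n : ℕ} (d : Fin n → Fin m → ℂ) (q : Fin n → ℝ) : ℝ :=
  sSup { x : ℝ | ∃ Pov : Fin n → Matrix (Fin m) (Fin m) ℂ,
    (∀ i, (Pov i).PosSemidef) ∧ (∑ i, Pov i) = 1 ∧
    x = ∑ i, q i * (ip (d i) ((Pov i) *ᵥ (d i))).re }

/-- The visibility `V(ρ̃_A) = √( (2(n−1)/n²) ∑_{i≠k} |⟨d_k, d_i⟩|² |(ρ_A)_{ik}|² )`. -/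
def Vis {m n : ℕ} (d : Fin n → Fin m → ℂ) (ρ : Matrix (Fin n) (Fin n) ℂ) : ℝ :=
  Real.sqrt ((2 * ((n : ℝ) - 1) / (n : ℝ) ^ 2) *
    ∑ i, ∑ k, if i = k then 0 else ‖ip (d k) (d i)‖ ^ 2 * ‖ρ i k‖ ^ 2)

/-- The post-interaction detector state `ρ̃_D = ∑ i, q i • d i (d i)^*`. -/
def detState {m n : ℕ} (d : Fin n → Fin m → ℂ) (q : Fin n → ℝ) :
    Matrix (Fin m) (Fin m) ℂ :=
  ∑ i, (q i : ℂ) • vecMulVec (d i) (star (d i))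

/-- The post-interaction particle state `(ρ̃_A)_{ik} = ⟨d_k, d_i⟩ (ρ_A)_{ik}`. -/
def post {m n : ℕ} (d : Fin n → Fin m → ℂ) (ρ : Matrix (Fin n) (Fin n) ℂ) :
    Matrix (Fin n) (Fin n) ℂ :=
  Matrix.of fun i k => ip (d k) (d i) * ρ i k

/-- The purity `Tr(ρ²)` (as a real number). -/
def purity {k : Type*} [Fintype k] (ρ : Matrix k k ℂ) : ℝ := ((ρ * ρ).trace).re

/-- The normalized mixedness `M(ρ) = (2(n−1)/n²)(1 − Tr(ρ²))`. -/
def Mix {k : Type*} [Fintype k] (n : ℕ) (ρ : Matrix k k ℂ) : ℝ :=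
  (2 * ((n : ℝ) - 1) / (n : ℝ) ^ 2) * (1 - purity ρ)

/-!
The terms of `V(ρ̃_A)²` and `M(ρ̃_A)` involving off-diagonal entries of `ρ_A` cancel, and the
diagonal ones match those of `M(ρ̃_D)`, so the claim is the bound
`(P_s - 1/n)² ≤ (n-1)(n-1-2S)/n²` with `S = ∑_{i≠k} q_i q_k |⟨d_i, d_k⟩|²`.
The uniform POVM gives `P_s ≥ 1/n`. For any POVM, `n ∑ q_i ⟨d_i, Π_i d_i⟩ - 1` is the sum over
`i ≠ k` of `q_i ⟨d_i, (Π_i - Π_k) d_i⟩`; pairing `(i, k)` with `(k, i)`, each pair is at most the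
two-state Helstrom value `√((q_i+q_k)² - 4 q_i q_k |⟨d_i, d_k⟩|²)`, obtained from Cauchy–Schwarz
for the positive operators `1 ± (Π_i - Π_k)`. Cauchy–Schwarz over the pairs then gives the bound.
-/

section InnerProduct

variable {k : Type*} [Fintype k]

lemma ip_eq_star_dotProduct (a b : k → ℂ) : ip a b = star a ⬝ᵥ b := rfl

lemma star_ip (a b : k → ℂ) : star (ip a b) = ip b a := by
  simp only [ip, star_sum, star_mul', star_star, mul_comm]

lemma ip_mul_ip_swap (a b : k → ℂ) :
    ip a b * ip b a = ((‖ip a b‖ ^ 2 : ℝ) : ℂ) := by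
  rw [← star_ip a b, Complex.star_def, Complex.mul_conj, Complex.normSq_eq_norm_sq]

lemma ip_real_smul (c : ℝ) (a b : k → ℂ) : ip a (c • b) = c * ip a b := by
  simp only [ip, Pi.smul_apply, Complex.real_smul, Finset.mul_sum, mul_left_comm]

lemma ip_eq_inner (a b : k → ℂ) :
    ip a b = inner ℂ (WithLp.toLp 2 a : EuclideanSpace ℂ k) (WithLp.toLp 2 b) := by
  simp only [ip, EuclideanSpace.inner_toLp_toLp, dotProduct, Pi.star_apply, mul_comm]

lemma re_ip_self (a : k → ℂ) :
    (ip a a).re = ‖(WithLp.toLp 2 a : EuclideanSpace ℂ k)‖ ^ 2 := by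
  rw [ip_eq_inner, ← RCLike.re_to_complex, inner_self_eq_norm_sq]

lemma norm_ip_sq_le (a b : k → ℂ) : ‖ip a b‖ ^ 2 ≤ (ip a a).re * (ip b b).re := by
  rw [re_ip_self, re_ip_self, ip_eq_inner, ← mul_pow]
  gcongr
  exact norm_inner_le_norm _ _

lemma norm_ip_le_one {a b : k → ℂ} (ha : ip a a = 1) (hb : ip b b = 1) : ‖ip a b‖ ^ 2 ≤ 1 := by
  simpa [ha, hb] using norm_ip_sq_le a b

lemma ip_add_mulVec (a b : k → ℂ) (M N : Matrix k k ℂ) :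
    ip a ((M + N) *ᵥ b) = ip a (M *ᵥ b) + ip a (N *ᵥ b) := by
  simp only [ip_eq_star_dotProduct, add_mulVec, dotProduct_add]

lemma ip_sub_mulVec (a b : k → ℂ) (M N : Matrix k k ℂ) :
    ip a ((M - N) *ᵥ b) = ip a (M *ᵥ b) - ip a (N *ᵥ b) := by
  simp only [ip_eq_star_dotProduct, sub_mulVec, dotProduct_sub]

lemma ip_sum_mulVec {ι : Type*} (s : Finset ι) (M : ι → Matrix k k ℂ) (a b : k → ℂ) :
    ip a ((∑ j ∈ s, M j) *ᵥ b) = ∑ j ∈ s, ip a (M j *ᵥ b) := by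
  simp only [ip_eq_star_dotProduct, Matrix.sum_mulVec, dotProduct_sum]

end InnerProduct

namespace Matrix.PosSemidef

variable {k : Type*} [Fintype k] {M : Matrix k k ℂ}

lemma re_ip_mulVec_nonneg (hM : M.PosSemidef) (a : k → ℂ) : 0 ≤ (ip a (M *ᵥ a)).re :=
  (Complex.le_def.mp (hM.dotProduct_mulVec_nonneg a)).1

lemma norm_ip_mulVec_sq_le [DecidableEq k] (hM : M.PosSemidef) (a b : k → ℂ) :
    ‖ip a (M *ᵥ b)‖ ^ 2 ≤ (ip a (M *ᵥ a)).re * (ip b (M *ᵥ b)).re := by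
  open scoped MatrixOrder in
  obtain ⟨B, rfl⟩ := CStarAlgebra.nonneg_iff_eq_star_mul_self.mp hM.nonneg
  have hB : ∀ x y : k → ℂ, ip x ((star B * B) *ᵥ y) = ip (B *ᵥ x) (B *ᵥ y) := fun x y => by
    rw [ip_eq_star_dotProduct, ip, ← mulVec_mulVec, dotProduct_mulVec, star_eq_conjTranspose,
      ← star_mulVec]; rfl
  simpa only [hB] using norm_ip_sq_le (B *ᵥ a) (B *ᵥ b)

end Matrix.PosSemidef

lemma sq_add_le_mul_add {x y a b c d : ℝ} (ha : 0 ≤ a) (hb : 0 ≤ b) (hc : 0 ≤ c) (hd : 0 ≤ d)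
    (hx : x ^ 2 ≤ a * b) (hy : y ^ 2 ≤ c * d) : (x + y) ^ 2 ≤ (a + c) * (b + d) := by
  simpa [Fin.sum_univ_two] using Finset.sum_sq_le_sum_mul_sum_of_sq_le_mul Finset.univ
    (r := ![x, y]) (f := ![a, c]) (g := ![b, d]) (by simp [Fin.forall_fin_two, ha, hc])
    (by simp [Fin.forall_fin_two, hb, hd]) (by simp [Fin.forall_fin_two, hx, hy])

lemma helstrom_sq_le {k : Type*} [Fintype k] [DecidableEq k] {C : Matrix k k ℂ}
    (hC₁ : (1 + C).PosSemidef) (hC₂ : (1 - C).PosSemidef) {u v : k → ℂ}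
    (hu : ip u u = 1) (hv : ip v v = 1) {p r : ℝ} (hp : 0 ≤ p) (hr : 0 ≤ r) :
    (p * (ip u (C *ᵥ u)).re - r * (ip v (C *ᵥ v)).re) ^ 2 ≤
      (p + r) ^ 2 - 4 * p * r * ‖ip u v‖ ^ 2 := by
  set A := (ip u (C *ᵥ u)).re
  set B := (ip v (C *ᵥ v)).re
  set γ := ip u v
  set c := ip u (C *ᵥ v)
  have hA₁ : 0 ≤ 1 + A := by simpa [ip_add_mulVec, hu] using hC₁.re_ip_mulVec_nonneg u
  have hA₂ : 0 ≤ 1 - A := by simpa [ip_sub_mulVec, hu] using hC₂.re_ip_mulVec_nonneg u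
  have hB₁ : 0 ≤ 1 + B := by simpa [ip_add_mulVec, hv] using hC₁.re_ip_mulVec_nonneg v
  have hB₂ : 0 ≤ 1 - B := by simpa [ip_sub_mulVec, hv] using hC₂.re_ip_mulVec_nonneg v
  have h₁ : ‖γ + c‖ ^ 2 ≤ (1 + A) * (1 + B) := by
    simpa [ip_add_mulVec, hu, hv] using hC₁.norm_ip_mulVec_sq_le u v
  have h₂ : ‖γ - c‖ ^ 2 ≤ (1 - A) * (1 - B) := by
    simpa [ip_sub_mulVec, hu, hv] using hC₂.norm_ip_mulVec_sq_le u v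
  have htri : 2 * ‖γ‖ ≤ ‖γ + c‖ + ‖γ - c‖ := by
    simpa [← two_mul] using norm_add_le (γ + c) (γ - c)
  set s := √(p * r)
  have hs : s ^ 2 = p * r := Real.sq_sqrt (by positivity)
  have hcs : (s * ‖γ + c‖ + s * ‖γ - c‖) ^ 2 ≤
      (p * (1 + A) + r * (1 - B)) * (r * (1 + B) + p * (1 - A)) := by
    apply sq_add_le_mul_add (by positivity) (by positivity) (by positivity) (by positivity)
    · calc (s * ‖γ + c‖) ^ 2 = p * r * ‖γ + c‖ ^ 2 := by rw [mul_pow, hs]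
        _ ≤ p * r * ((1 + A) * (1 + B)) := by gcongr
        _ = _ := by ring
    · calc (s * ‖γ - c‖) ^ 2 = p * r * ‖γ - c‖ ^ 2 := by rw [mul_pow, hs]
        _ ≤ p * r * ((1 - A) * (1 - B)) := by gcongr
        _ = _ := by ring
  have hγ : 4 * p * r * ‖γ‖ ^ 2 ≤ (s * ‖γ + c‖ + s * ‖γ - c‖) ^ 2 :=
    calc 4 * p * r * ‖γ‖ ^ 2 = (s * (2 * ‖γ‖)) ^ 2 := by rw [mul_pow, hs]; ring
      _ ≤ (s * ‖γ + c‖ + s * ‖γ - c‖) ^ 2 := by rw [← mul_add]; gcongr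
  have hprod : (p * (1 + A) + r * (1 - B)) * (r * (1 + B) + p * (1 - A)) =
      (p + r) ^ 2 - (p * A - r * B) ^ 2 := by ring
  linarith

namespace Finset

variable {ι M : Type*} [AddCommMonoid M]

lemma sum_offDiag_swap (s : Finset ι) (f : ι → ι → M) :
    ∑ p ∈ s.offDiag, f p.2 p.1 = ∑ p ∈ s.offDiag, f p.1 p.2 :=
  sum_nbij' Prod.swap Prod.swap (by simp [and_left_comm, eq_comm])
    (by simp [and_left_comm, eq_comm]) (by simp) (by simp) (by simp)

variable [Fintype ι] [DecidableEq ι]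

lemma sum_sum_eq_sum_add_sum_offDiag (f : ι → ι → M) :
    ∑ i, ∑ k, f i k = ∑ i, f i i + ∑ p ∈ univ.offDiag, f p.1 p.2 := by
  rw [← sum_product', ← diag_union_offDiag, sum_union (disjoint_diag_offDiag _), sum_diag]

lemma sum_sum_ite_eq_sum_offDiag (f : ι → ι → M) :
    ∑ i, ∑ k, (if i = k then 0 else f i k) = ∑ p ∈ univ.offDiag, f p.1 p.2 := by
  rw [sum_sum_eq_sum_add_sum_offDiag]
  simp only [if_true, sum_const_zero, zero_add]
  exact sum_congr rfl fun p hp => if_neg (mem_offDiag.mp hp).2.2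

end Finset

open Finset

def pairOverlap {ι k : Type*} [Fintype ι] [DecidableEq ι] [Fintype k] (d : ι → k → ℂ)
    (q : ι → ℝ) : ℝ :=
  ∑ p ∈ univ.offDiag, q p.1 * q p.2 * ‖ip (d p.1) (d p.2)‖ ^ 2

lemma add_le_one_of_sum_eq_one {ι : Type*} [Fintype ι] [DecidableEq ι] {q : ι → ℝ}
    (hq₀ : ∀ i, 0 ≤ q i) (hq₁ : ∑ i, q i = 1) {i j : ι} (hij : i ≠ j) : q i + q j ≤ 1 := by
  rw [← sum_pair hij, ← hq₁]
  exact sum_le_sum_of_subset_of_nonneg (subset_univ _) fun l _ _ => hq₀ l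

lemma posSemidef_one_sub_sub {ι k : Type*} [Fintype ι] [DecidableEq ι] [DecidableEq k]
    {Pov : ι → Matrix k k ℂ} (hPov : ∀ i, (Pov i).PosSemidef) (hsum : ∑ i, Pov i = 1)
    {i j : ι} (hij : i ≠ j) : (1 - Pov i - Pov j).PosSemidef := by
  have : 1 - Pov i - Pov j = ∑ l ∈ (univ.erase i).erase j, Pov l := by
    rw [← hsum, ← add_sum_erase _ _ (mem_univ i),
      ← add_sum_erase _ _ (mem_erase.2 ⟨hij.symm, mem_univ j⟩)]
    abel
  rw [this]
  exact Matrix.posSemidef_sum _ fun l _ => hPov l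

section POVM

variable {ι k : Type*} [Fintype ι] [DecidableEq ι] [Fintype k] [DecidableEq k]
  {Pov : ι → Matrix k k ℂ} {d : ι → k → ℂ} {q : ι → ℝ}

lemma sq_povm_pair_le (hPov : ∀ i, (Pov i).PosSemidef) (hsum : ∑ i, Pov i = 1)
    (hd : ∀ i, ip (d i) (d i) = 1) (hq₀ : ∀ i, 0 ≤ q i) {i j : ι} (hij : i ≠ j) :
    (q i * (ip (d i) ((Pov i - Pov j) *ᵥ d i)).re +
        q j * (ip (d j) ((Pov j - Pov i) *ᵥ d j)).re) ^ 2 ≤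
      (q i + q j) ^ 2 - 4 * q i * q j * ‖ip (d i) (d j)‖ ^ 2 := by
  have hR := posSemidef_one_sub_sub hPov hsum hij
  have h₁ : (1 + (Pov i - Pov j)).PosSemidef := by
    rw [show 1 + (Pov i - Pov j) = Pov i + Pov i + (1 - Pov i - Pov j) by abel]
    exact ((hPov i).add (hPov i)).add hR
  have h₂ : (1 - (Pov i - Pov j)).PosSemidef := by
    rw [show 1 - (Pov i - Pov j) = Pov j + Pov j + (1 - Pov i - Pov j) by abel]
    exact ((hPov j).add (hPov j)).add hR
  convert helstrom_sq_le h₁ h₂ (hd i) (hd j) (hq₀ i) (hq₀ j) using 2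
  simp only [ip_sub_mulVec, Complex.sub_re]
  ring

lemma card_mul_sum_sub_one_eq (hsum : ∑ i, Pov i = 1) (hd : ∀ i, ip (d i) (d i) = 1)
    (hq₁ : ∑ i, q i = 1) :
    Fintype.card ι * ∑ i, q i * (ip (d i) (Pov i *ᵥ d i)).re - 1 =
      ∑ p ∈ univ.offDiag, q p.1 * (ip (d p.1) ((Pov p.1 - Pov p.2) *ᵥ d p.1)).re := by
  have htot : ∀ i, ∑ j, (ip (d i) (Pov j *ᵥ d i)).re = 1 := fun i => by
    rw [← Complex.re_sum, ← ip_sum_mulVec, hsum, one_mulVec, hd i, Complex.one_re]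
  have h := sum_sum_eq_sum_add_sum_offDiag
    fun i j => q i * (ip (d i) ((Pov i - Pov j) *ᵥ d i)).re
  rw [show ∑ i, q i * (ip (d i) ((Pov i - Pov i) *ᵥ d i)).re = 0 by simp [ip], zero_add] at h
  rw [← h]
  simp only [ip_sub_mulVec, Complex.sub_re, mul_sub, sum_sub_distrib, sum_const, card_univ,
    nsmul_eq_mul, ← mul_sum, htot, mul_one, hq₁]

lemma sq_card_mul_sum_sub_one_le (hPov : ∀ i, (Pov i).PosSemidef) (hsum : ∑ i, Pov i = 1)
    (hd : ∀ i, ip (d i) (d i) = 1) (hq₀ : ∀ i, 0 ≤ q i) (hq₁ : ∑ i, q i = 1) :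
    (Fintype.card ι * ∑ i, q i * (ip (d i) (Pov i *ᵥ d i)).re - 1) ^ 2 ≤
      (Fintype.card ι - 1) * (Fintype.card ι - 1 - 2 * pairOverlap d q) := by
  set G : ι → ι → ℝ := fun i j => q i * (ip (d i) ((Pov i - Pov j) *ᵥ d i)).re
  have hG : 2 * (Fintype.card ι * ∑ i, q i * (ip (d i) (Pov i *ᵥ d i)).re - 1) =
      ∑ p ∈ univ.offDiag, (G p.1 p.2 + G p.2 p.1) := by
    rw [card_mul_sum_sub_one_eq hsum hd hq₁, sum_add_distrib, sum_offDiag_swap]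
    ring
  have hf : ∑ p ∈ (univ : Finset ι).offDiag, (q p.1 + q p.2) = 2 * (Fintype.card ι - 1) := by
    have h := sum_sum_eq_sum_add_sum_offDiag fun i j => q i + q j
    simp only [sum_add_distrib, sum_const, card_univ, nsmul_eq_mul, ← mul_sum, hq₁] at h
    rw [sum_add_distrib]
    linarith
  have hg : ∑ p ∈ (univ : Finset ι).offDiag,
      (q p.1 + q p.2 - 4 * q p.1 * q p.2 * ‖ip (d p.1) (d p.2)‖ ^ 2) =
        2 * (Fintype.card ι - 1) - 4 * pairOverlap d q := by
    rw [sum_sub_distrib, hf, pairOverlap, mul_sum]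
    simp only [mul_assoc]
  have hcs := sum_sq_le_sum_mul_sum_of_sq_le_mul univ.offDiag
    (r := fun p => G p.1 p.2 + G p.2 p.1) (f := fun p => q p.1 + q p.2)
    (g := fun p => q p.1 + q p.2 - 4 * q p.1 * q p.2 * ‖ip (d p.1) (d p.2)‖ ^ 2)
    (fun p _ => add_nonneg (hq₀ _) (hq₀ _)) ?_ ?_
  · rw [← hG, hf, hg] at hcs
    nlinarith
  all_goals
    intro p hp
    have hij := (mem_offDiag.mp hp).2.2
    have hle := add_le_one_of_sum_eq_one hq₀ hq₁ hij
    have hqq := mul_nonneg (hq₀ p.1) (hq₀ p.2)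
    have ht := mul_le_of_le_one_right hqq (norm_ip_le_one (hd p.1) (hd p.2))
  · nlinarith [sq_nonneg (q p.1 - q p.2),
      mul_nonneg (add_nonneg (hq₀ p.1) (hq₀ p.2)) (sub_nonneg.2 hle)]
  · -- `s² - 4t ≤ s (s - 4t)` because `s = q i + q j ≤ 1`
    have := sq_povm_pair_le hPov hsum hd hq₀ hij
    nlinarith [mul_le_of_le_one_left (mul_nonneg hqq (sq_nonneg ‖ip (d p.1) (d p.2)‖)) hle]

end POVM

lemma sq_Ps_sub_le {m n : ℕ} (hn : 0 < n) {d : Fin n → Fin m → ℂ}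
    (hd : ∀ i, ip (d i) (d i) = 1) {q : Fin n → ℝ} (hq₀ : ∀ i, 0 ≤ q i) (hq₁ : ∑ i, q i = 1) :
    (Ps d q - 1 / n) ^ 2 ≤ (n - 1) * (n - 1 - 2 * pairOverlap d q) / n ^ 2 := by
  set T := ((n : ℝ) - 1) * (n - 1 - 2 * pairOverlap d q)
  have hn' : (0 : ℝ) < n := Nat.cast_pos.mpr hn
  have hsq : ∀ Pov : Fin n → Matrix (Fin m) (Fin m) ℂ, (∀ i, (Pov i).PosSemidef) →
      ∑ i, Pov i = 1 → (n * ∑ i, q i * (ip (d i) (Pov i *ᵥ d i)).re - 1) ^ 2 ≤ T :=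
    fun Pov hPov hsum => by simpa using sq_card_mul_sum_sub_one_le hPov hsum hd hq₀ hq₁
  have hup : ∀ Pov : Fin n → Matrix (Fin m) (Fin m) ℂ, (∀ i, (Pov i).PosSemidef) →
      ∑ i, Pov i = 1 → ∑ i, q i * (ip (d i) (Pov i *ᵥ d i)).re ≤ (1 + √T) / n :=
    fun Pov hPov hsum => by
      rw [le_div_iff₀ hn']
      linarith [(le_abs_self _).trans (Real.abs_le_sqrt (hsq Pov hPov hsum))]
  set U : Fin n → Matrix (Fin m) (Fin m) ℂ := fun _ => (n : ℝ)⁻¹ • 1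
  have hU : ∀ i, (U i).PosSemidef := fun _ => Matrix.PosSemidef.one.smul (by positivity)
  have hUsum : ∑ i, U i = 1 := by simp [U, ← Nat.cast_smul_eq_nsmul ℝ, smul_smul, hn.ne']
  have hUval : ∑ i, q i * (ip (d i) (U i *ᵥ d i)).re = 1 / n := by
    simp [U, smul_mulVec, ip_real_smul, hd, ← sum_mul, hq₁]
  have hT : 0 ≤ T := (sq_nonneg _).trans (hsq U hU hUsum)
  have hlo : 1 / n ≤ Ps d q :=
    le_csSup ⟨_, fun _ ⟨Pov, hPov, hsum, hx⟩ => hx ▸ hup Pov hPov hsum⟩ ⟨U, hU, hUsum, hUval.symm⟩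
  have hhi : Ps d q ≤ (1 + √T) / n :=
    csSup_le ⟨_, U, hU, hUsum, hUval.symm⟩ fun _ ⟨Pov, hPov, hsum, hx⟩ => hx ▸ hup Pov hPov hsum
  calc (Ps d q - 1 / n) ^ 2 ≤ (√T / n) ^ 2 := by
        rw [add_div] at hhi
        exact pow_le_pow_left₀ (by linarith) (by linarith) 2
    _ = T / n ^ 2 := by rw [div_pow, Real.sq_sqrt hT]

lemma purity_detState {m n : ℕ} (d : Fin n → Fin m → ℂ) (q : Fin n → ℝ) :
    purity (detState d q) = ∑ i, ∑ j, q i * q j * ‖ip (d i) (d j)‖ ^ 2 := by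
  have h : (detState d q * detState d q).trace =
      ((∑ i, ∑ j, q i * q j * ‖ip (d i) (d j)‖ ^ 2 : ℝ) : ℂ) := by
    simp only [detState, sum_mul, mul_sum, smul_mul_smul_comm, vecMulVec_mul_vecMulVec,
      trace_sum, trace_smul, trace_vecMulVec, dotProduct_smul, ← ip_eq_star_dotProduct]
    push_cast
    refine sum_congr rfl fun i _ => sum_congr rfl fun j _ => ?_
    rw [dotProduct_comm, ← ip_eq_star_dotProduct, smul_eq_mul, smul_eq_mul, mul_comm (ip _ _),
      ip_mul_ip_swap]
    push_cast
    ring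
  rw [purity, h, Complex.ofReal_re]

lemma purity_post {m n : ℕ} (d : Fin n → Fin m → ℂ) {ρ : Matrix (Fin n) (Fin n) ℂ}
    (hρ : ρ.IsHermitian) :
    purity (post d ρ) = ∑ i, ∑ j, ‖ip (d j) (d i)‖ ^ 2 * ‖ρ i j‖ ^ 2 := by
  have h : (post d ρ * post d ρ).trace =
      ((∑ i, ∑ j, ‖ip (d j) (d i)‖ ^ 2 * ‖ρ i j‖ ^ 2 : ℝ) : ℂ) := by
    push_cast
    refine sum_congr rfl fun i _ => ?_
    rw [diag_apply, mul_apply]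
    refine sum_congr rfl fun j _ => ?_
    rw [post, of_apply, of_apply, ← hρ.apply j i, mul_mul_mul_comm, ip_mul_ip_swap,
      Complex.star_def, Complex.mul_conj, Complex.normSq_eq_norm_sq]
    push_cast
    rfl
  rw [purity, h, Complex.ofReal_re]

lemma mixCoeff_nonneg (n : ℕ) : 0 ≤ 2 * ((n : ℝ) - 1) / (n : ℝ) ^ 2 := by
  rcases n with _ | n
  · simp -- `x / 0 = 0`
  · rw [Nat.cast_succ, add_sub_cancel_right]
    positivity

lemma sq_Vis_add_Mix_post {m n : ℕ} {d : Fin n → Fin m → ℂ} (hd : ∀ i, ip (d i) (d i) = 1)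
    {ρ : Matrix (Fin n) (Fin n) ℂ} (hρ : ρ.IsHermitian) :
    Vis d ρ ^ 2 + Mix n (post d ρ) = 2 * ((n : ℝ) - 1) / n ^ 2 * (1 - ∑ i, ‖ρ i i‖ ^ 2) := by
  rw [Vis, Real.sq_sqrt (mul_nonneg (mixCoeff_nonneg n) (sum_nonneg fun _ _ =>
      sum_nonneg fun _ _ => by split_ifs <;> positivity)),
    Mix, purity_post d hρ, sum_sum_ite_eq_sum_offDiag, sum_sum_eq_sum_add_sum_offDiag]
  simp only [hd, norm_one, one_pow, one_mul]
  ring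

lemma Mix_detState {m n : ℕ} {d : Fin n → Fin m → ℂ} (hd : ∀ i, ip (d i) (d i) = 1)
    (q : Fin n → ℝ) :
    Mix n (detState d q) =
      2 * ((n : ℝ) - 1) / n ^ 2 * (1 - ∑ i, q i ^ 2 - pairOverlap d q) := by
  rw [Mix, purity_detState, sum_sum_eq_sum_add_sum_offDiag, pairOverlap]
  simp only [hd, norm_one, mul_one, sq]
  ring

theorem stmt2_general (n m : ℕ) (d : Fin n → Fin m → ℂ)
    (hd : ∀ i, ip (d i) (d i) = 1)
    (ρA : Matrix (Fin n) (Fin n) ℂ) (hpsd : ρA.PosSemidef) (htr : ρA.trace = 1)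
    (q : Fin n → ℝ) (hq : ∀ i, (q i : ℂ) = ρA i i) :
    (Ps d q - 1 / n) ^ 2 + (Vis d ρA) ^ 2 + Mix n (post d ρA) ≤
      (1 - 1 / (n : ℝ)) ^ 2 + Mix n (detState d q) := by
  have hq₀ : ∀ i, 0 ≤ q i := fun i => by
    simpa [← hq i] using hpsd.diag_nonneg (i := i)
  have hq₁ : ∑ i, q i = 1 := by
    exact_mod_cast (show ((∑ i, q i : ℝ) : ℂ) = 1 by push_cast [hq]; exact htr)
  have hn : 0 < n := Nat.pos_of_ne_zero (by rintro rfl; simp at hq₁)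
  have hdiag : ∑ i, ‖ρA i i‖ ^ 2 = ∑ i, q i ^ 2 := by
    simp only [← hq, Complex.norm_real, Real.norm_eq_abs, sq_abs]
  have hPs := sq_Ps_sub_le hn hd hq₀ hq₁
  rw [add_assoc, sq_Vis_add_Mix_post hd hpsd.isHermitian, Mix_detState hd, hdiag]
  have hn' : (n : ℝ) ≠ 0 := by positivity
  have : ((n : ℝ) - 1) * (n - 1 - 2 * pairOverlap d q) / n ^ 2 =
      (1 - 1 / (n : ℝ)) ^ 2 - 2 * ((n : ℝ) - 1) / n ^ 2 * pairOverlap d q := by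
    field_simp
  linarith

/-- triality among path distinguishability, visibility and mixedness in the
`n`-path interferometer with detectors and quantum memory. -/
theorem stmt2 (n m : ℕ) (hn : 2 ≤ n) (d : Fin n → Fin m → ℂ)
    (hd : ∀ i, ip (d i) (d i) = 1)
    (ρA : Matrix (Fin n) (Fin n) ℂ) (hpsd : ρA.PosSemidef) (htr : ρA.trace = 1)
    (q : Fin n → ℝ) (hq : ∀ i, (q i : ℂ) = ρA i i) :
    (Ps d q - 1 / n) ^ 2 + (Vis d ρA) ^ 2 + Mix n (post d ρA) ≤
      (1 - 1 / (n : ℝ)) ^ 2 + Mix n (detState d q) :=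
  stmt2_general n m d hd ρA hpsd htr q hq
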